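/- arXiv:2212.02835 — 3 statements merged into one kernel-verified Lean document; each statement's English description precedes it below -/
import Mathlib

section
/- Let f : ℝⁿ → ℝ be convex and differentiable with L-Lipschitz continuous gradient. Then for all x₁, x₂, x₃ ∈ ℝⁿ, ⟨x₁ - x₂, ∇f(x₃) - ∇f(x₁)⟩ ≤ (L/4)‖x₂ - x₃‖². -/
/-!
The key fact is Baillon–Haddad cocoercivity,
`‖∇f y - ∇f x‖² ≤ L ⟪∇f y - ∇f x, y - x⟫`. It comes from the descent lemma applied to the
convex function `φ = f - ⟪∇f x, ·⟫`, which is minimised at `x`: one gradient step of length `1/L`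
from `y` lowers `φ` by at least `‖∇φ y‖² / (2L)`, so `φ x ≤ φ y - ‖∇f y - ∇f x‖² / (2L)`;
adding this to the same bound with `x` and `y` swapped gives cocoercivity.
With `g = ∇f x₃ - ∇f x₁`, cocoercivity bounds `⟪x₃ - x₁, g⟫` below by `‖g‖² / L`, and then
`⟪x₁ - x₂, g⟫ = ⟪x₃ - x₂, g⟫ - ⟪x₃ - x₁, g⟫ ≤ ‖x₃ - x₂‖ ‖g‖ - ‖g‖² / L ≤ L/4 ‖x₃ - x₂‖²`.
-/
open scoped RealInnerProductSpace

section

variable {E : Type*} [NormedAddCommGroup E] [InnerProductSpace ℝ E] [CompleteSpace E]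
  {f : E → ℝ} {f' : E → E} {L : ℝ}

theorem HasGradientAt.sub_inner_const {a g x : E} (hf : HasGradientAt f a x) :
    HasGradientAt (fun w => f w - ⟪g, w⟫) (a - g) x := by
  rw [hasGradientAt_iff_hasFDerivAt] at hf ⊢
  rw [map_sub]
  exact hf.sub (InnerProductSpace.toDual ℝ E g).hasFDerivAt

theorem HasGradientAt.hasDerivAt_comp_add_smul {x v : E} {t : ℝ} {a : E}
    (hf : HasGradientAt f a (x + t • v)) :
    HasDerivAt (fun s : ℝ => f (x + s • v)) ⟪a, v⟫ t := by
  have hline : HasDerivAt (fun s : ℝ => x + s • v) v t := by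
    simpa using ((hasDerivAt_id t).smul_const v).const_add x
  simpa [Function.comp_def] using hf.hasFDerivAt.comp_hasDerivAt t hline

theorem ConvexOn.add_inner_le_of_hasGradientAt (hconv : ConvexOn ℝ Set.univ f) {a x : E}
    (hgrad : HasGradientAt f a x) (y : E) : f x + ⟪a, y - x⟫ ≤ f y := by
  have hline : ConvexOn ℝ Set.univ (fun s : ℝ => f (x + s • (y - x))) := by
    simpa [Function.comp_def, AffineMap.lineMap_apply, add_comm] using
      hconv.comp_affineMap (AffineMap.lineMap x y : ℝ →ᵃ[ℝ] E)
  have hslope := hline.le_slope_of_hasDerivAt (Set.mem_univ 0) (Set.mem_univ 1) zero_lt_one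
    (HasGradientAt.hasDerivAt_comp_add_smul (by simpa using hgrad))
  simp only [slope_def_field] at hslope
  norm_num at hslope
  linarith

theorem le_add_inner_add_sq_of_lipschitz_gradient {x : E}
    (hgrad : ∀ z, HasGradientAt f (f' z) z) (hlip : ∀ z, ‖f' z - f' x‖ ≤ L * ‖z - x‖) (y : E) :
    f y ≤ f x + ⟪f' x, y - x⟫ + L / 2 * ‖y - x‖ ^ 2 := by
  set v := y - x
  set g : ℝ → ℝ := fun t => f (x + t • v) - t * ⟪f' x, v⟫
  -- `g` stays below the parabola `B` on `[0, 1]` because their derivatives do.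
  set B : ℝ → ℝ := fun t => f x + L / 2 * ‖v‖ ^ 2 * t ^ 2
  have hg : ∀ t, HasDerivAt g (⟪f' (x + t • v) - f' x, v⟫) t := fun t => by
    rw [inner_sub_left]
    exact (hgrad _).hasDerivAt_comp_add_smul.sub (hasDerivAt_mul_const _)
  have hB : ∀ t, HasDerivAt B (L * ‖v‖ ^ 2 * t) t := fun t =>
    (((hasDerivAt_pow 2 t).const_mul _).const_add _).congr_deriv (by push_cast; ring)
  have hbound : ∀ t ∈ Set.Ico (0 : ℝ) 1, ⟪f' (x + t • v) - f' x, v⟫ ≤ L * ‖v‖ ^ 2 * t := by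
    rintro t ⟨ht, -⟩
    calc ⟪f' (x + t • v) - f' x, v⟫ ≤ ‖f' (x + t • v) - f' x‖ * ‖v‖ := real_inner_le_norm _ _
      _ ≤ L * ‖t • v‖ * ‖v‖ := by
          gcongr
          simpa using hlip (x + t • v)
      _ = L * ‖v‖ ^ 2 * t := by rw [norm_smul, Real.norm_of_nonneg ht]; ring
  have h1 := image_le_of_deriv_right_le_deriv_boundary
    (fun t _ => (hg t).continuousAt.continuousWithinAt) (fun t _ => (hg t).hasDerivWithinAt)
    (by simp [g, B]) (fun t _ => (hB t).continuousAt.continuousWithinAt)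
    (fun t _ => (hB t).hasDerivWithinAt) hbound (Set.right_mem_Icc.mpr zero_le_one)
  simp only [g, B, v, one_smul, one_mul, one_pow, mul_one, add_sub_cancel] at h1
  linarith

theorem IsMinOn.add_sq_norm_gradient_div_le {x y : E} (hmin : IsMinOn f Set.univ x) (hL : 0 < L)
    (hgrad : ∀ z, HasGradientAt f (f' z) z) (hlip : ∀ z, ‖f' z - f' y‖ ≤ L * ‖z - y‖) :
    f x + ‖f' y‖ ^ 2 / (2 * L) ≤ f y := by
  have hstep := le_add_inner_add_sq_of_lipschitz_gradient hgrad hlip (y - L⁻¹ • f' y)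
  have hmin_step : f x ≤ f (y - L⁻¹ • f' y) := hmin (Set.mem_univ _)
  rw [sub_sub_cancel_left, inner_neg_right, real_inner_smul_right, real_inner_self_eq_norm_sq,
    norm_neg, norm_smul, Real.norm_of_nonneg (inv_nonneg.mpr hL.le)] at hstep
  have hval : -(L⁻¹ * ‖f' y‖ ^ 2) + L / 2 * (L⁻¹ * ‖f' y‖) ^ 2 = -(‖f' y‖ ^ 2 / (2 * L)) := by
    field_simp
    ring
  linarith

theorem ConvexOn.add_inner_add_sq_norm_sub_div_le (hconv : ConvexOn ℝ Set.univ f) (hL : 0 < L)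
    (hgrad : ∀ z, HasGradientAt f (f' z) z) (hlip : ∀ z w, ‖f' z - f' w‖ ≤ L * ‖z - w‖)
    (x y : E) : f x + ⟪f' x, y - x⟫ + ‖f' y - f' x‖ ^ 2 / (2 * L) ≤ f y := by
  set φ : E → ℝ := fun z => f z - ⟪f' x, z⟫
  have hφgrad : ∀ z, HasGradientAt φ (f' z - f' x) z := fun z => (hgrad z).sub_inner_const
  have hφconv : ConvexOn ℝ Set.univ φ := hconv.sub ((innerₛₗ ℝ (f' x)).concaveOn convex_univ)
  have hmin : IsMinOn φ Set.univ x := fun z _ => by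
    simpa using hφconv.add_inner_le_of_hasGradientAt (hφgrad x) z
  have h := hmin.add_sq_norm_gradient_div_le hL hφgrad (fun z => by simpa using hlip z y)
  simp only [φ, inner_sub_right] at h ⊢
  linarith

theorem ConvexOn.sq_norm_sub_le_mul_inner (hconv : ConvexOn ℝ Set.univ f) (hL : 0 ≤ L)
    (hgrad : ∀ z, HasGradientAt f (f' z) z) (hlip : ∀ z w, ‖f' z - f' w‖ ≤ L * ‖z - w‖)
    (x y : E) : ‖f' y - f' x‖ ^ 2 ≤ L * ⟪f' y - f' x, y - x⟫ := by
  rcases hL.eq_or_lt with rfl | hL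
  · have h := hlip y x
    rw [zero_mul, norm_le_zero_iff] at h
    simp [h]
  have hxy := hconv.add_inner_add_sq_norm_sub_div_le hL hgrad hlip x y
  have hyx := hconv.add_inner_add_sq_norm_sub_div_le hL hgrad hlip y x
  rw [norm_sub_rev, ← neg_sub y x, inner_neg_right] at hyx
  calc ‖f' y - f' x‖ ^ 2
      = L * (‖f' y - f' x‖ ^ 2 / (2 * L) + ‖f' y - f' x‖ ^ 2 / (2 * L)) := by field_simp; ring
    _ ≤ L * ⟪f' y - f' x, y - x⟫ := by
        gcongr
        rw [inner_sub_left]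
        linarith

end

theorem inner_sub_le_of_sq_norm_le_mul_inner {F : Type*} [NormedAddCommGroup F]
    [InnerProductSpace ℝ F] {L : ℝ} {g u w : F} (hL : 0 ≤ L) (h : ‖g‖ ^ 2 ≤ L * ⟪g, u⟫) :
    ⟪w - u, g⟫ ≤ L / 4 * ‖w‖ ^ 2 := by
  rcases hL.eq_or_lt with rfl | hL
  · have hg : g = 0 := by simpa using h
    simp [hg]
  refine le_of_mul_le_mul_left ?_ hL
  rw [inner_sub_left, real_inner_comm g u]
  nlinarith [real_inner_le_norm w g, sq_nonneg (L * ‖w‖ - 2 * ‖g‖)]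

theorem stmt_0 {n : ℕ} (f : EuclideanSpace ℝ (Fin n) → ℝ)
    (f' : EuclideanSpace ℝ (Fin n) → EuclideanSpace ℝ (Fin n)) (L : ℝ) (hL : 0 ≤ L)
    (hconv : ConvexOn ℝ Set.univ f)
    (hgrad : ∀ x, HasGradientAt f (f' x) x)
    (hlip : ∀ x y, ‖f' x - f' y‖ ≤ L * ‖x - y‖) :
    ∀ x₁ x₂ x₃ : EuclideanSpace ℝ (Fin n),
      ⟪x₁ - x₂, f' x₃ - f' x₁⟫ ≤ L / 4 * ‖x₂ - x₃‖ ^ 2 := by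
  intro x₁ x₂ x₃
  have hcoco := hconv.sq_norm_sub_le_mul_inner hL hgrad hlip x₁ x₃
  have h := inner_sub_le_of_sq_norm_le_mul_inner (w := x₃ - x₂) hL hcoco
  rwa [sub_sub_sub_cancel_left, norm_sub_rev] at h
end

section
/- Let α > 0, 0 < γ < 1, and let B and D be matrices with ‖DDᵀ‖ ≤ 1. Define S = ((α + αγ)/γ) I + (α/(1-γ)) B Bᵀ and Q = diag(αγ⁻¹ I, S) (block diagonal). Then Q - α·[[DDᵀ, DBᵀ],[BDᵀ, BBᵀ + I]] is positive definite for all 0 < γ < 1. -/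
open scoped Matrix

private lemma dot_self_nonneg' {n : ℕ} (w : Fin n → ℝ) : 0 ≤ w ⬝ᵥ w :=
  Finset.sum_nonneg fun _ _ => mul_self_nonneg _

theorem stmt_10 {p q n : ℕ} (D : Matrix (Fin p) (Fin n) ℝ)
    (B : Matrix (Fin q) (Fin n) ℝ) (α γ : ℝ)
    (hα : 0 < α) (hγ0 : 0 < γ) (hγ1 : γ < 1)
    (hD : ((1 : Matrix (Fin p) (Fin p) ℝ) - D * Dᵀ).PosSemidef) :
    let S : Matrix (Fin q) (Fin q) ℝ :=
      ((α + α * γ) / γ) • 1 + (α / (1 - γ)) • (B * Bᵀ)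
    let Q : Matrix (Fin p ⊕ Fin q) (Fin p ⊕ Fin q) ℝ :=
      Matrix.fromBlocks ((α / γ) • 1) 0 0 S
    let M : Matrix (Fin p ⊕ Fin q) (Fin p ⊕ Fin q) ℝ :=
      Matrix.fromBlocks (D * Dᵀ) (D * Bᵀ) (B * Dᵀ) (B * Bᵀ + 1)
    (Q - α • M).PosDef := by
  intro S Q M
  have h1γ : 0 < 1 - γ := by linarith
  refine Matrix.posDef_iff_dotProduct_mulVec.mpr ⟨?_, ?_⟩
  · -- Hermitian
    show (Q - α • M)ᴴ = Q - α • M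
    have hS : Sᴴ = S := by
      simp [S, Matrix.conjTranspose_add, Matrix.conjTranspose_smul,
        Matrix.conjTranspose_mul]
    have hQ : Qᴴ = Q := by
      apply (Matrix.isHermitian_fromBlocks_iff).mpr
      exact ⟨by simp [Matrix.IsHermitian], by simp, by simp, hS⟩
    have hM : Mᴴ = M := by
      apply (Matrix.isHermitian_fromBlocks_iff).mpr
      refine ⟨?_, ?_, ?_, ?_⟩ <;>
        simp [Matrix.IsHermitian, Matrix.conjTranspose_mul,
          Matrix.conjTranspose_add]
    rw [Matrix.conjTranspose_sub, Matrix.conjTranspose_smul, hQ, hM, star_trivial]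
  · intro x hx
    set u : Fin p → ℝ := x ∘ Sum.inl with hu
    set v : Fin q → ℝ := x ∘ Sum.inr with hv
    have hxe : x = Sum.elim u v := by ext i; cases i <;> rfl
    set a : Fin n → ℝ := Dᵀ *ᵥ u with ha
    set b : Fin n → ℝ := Bᵀ *ᵥ v with hb
    -- key algebraic identity
    have key : star x ⬝ᵥ ((Q - α • M) *ᵥ x)
        = (α / γ) * (u ⬝ᵥ u) - α * (a ⬝ᵥ a) - 2 * α * (a ⬝ᵥ b)
          + (α / γ) * (v ⬝ᵥ v) + (α * γ / (1 - γ)) * (b ⬝ᵥ b) := by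
      have hdd : u ⬝ᵥ ((D * Dᵀ) *ᵥ u) = a ⬝ᵥ a := by
        rw [← Matrix.mulVec_mulVec, Matrix.dotProduct_mulVec, ← Matrix.mulVec_transpose]
      have hdb : u ⬝ᵥ ((D * Bᵀ) *ᵥ v) = a ⬝ᵥ b := by
        rw [← Matrix.mulVec_mulVec, Matrix.dotProduct_mulVec, ← Matrix.mulVec_transpose]
      have hbd : v ⬝ᵥ ((B * Dᵀ) *ᵥ u) = b ⬝ᵥ a := by
        rw [← Matrix.mulVec_mulVec, Matrix.dotProduct_mulVec, ← Matrix.mulVec_transpose]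
      have hbb : v ⬝ᵥ ((B * Bᵀ) *ᵥ v) = b ⬝ᵥ b := by
        rw [← Matrix.mulVec_mulVec, Matrix.dotProduct_mulVec, ← Matrix.mulVec_transpose]
      have hcomm : b ⬝ᵥ a = a ⬝ᵥ b := dotProduct_comm _ _
      rw [star_trivial, hxe]
      simp only [Q, M, S, Matrix.sub_mulVec, Matrix.smul_mulVec,
        Matrix.fromBlocks_mulVec, Sum.elim_comp_inl, Sum.elim_comp_inr,
        Matrix.add_mulVec, Matrix.zero_mulVec, Matrix.one_mulVec,
        dotProduct_sub, dotProduct_smul, dotProduct_add,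
        sumElim_dotProduct_sumElim, add_zero, zero_add,
        Pi.smul_apply, smul_eq_mul]
      rw [hdd, hdb, hbd, hbb, hcomm]
      field_simp
      ring
    rw [key]
    -- facts
    have hA : a ⬝ᵥ a ≤ u ⬝ᵥ u := by
      have := hD.dotProduct_mulVec_nonneg u
      rw [star_trivial, Matrix.sub_mulVec, Matrix.one_mulVec,
        dotProduct_sub] at this
      have hdd : u ⬝ᵥ ((D * Dᵀ) *ᵥ u) = a ⬝ᵥ a := by
        rw [← Matrix.mulVec_mulVec, Matrix.dotProduct_mulVec, ← Matrix.mulVec_transpose]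
      rw [hdd] at this
      linarith
    have hAnn : 0 ≤ a ⬝ᵥ a := dot_self_nonneg' a
    have hBnn : 0 ≤ b ⬝ᵥ b := dot_self_nonneg' b
    have hUnn : 0 ≤ u ⬝ᵥ u := dot_self_nonneg' u
    have hVnn : 0 ≤ v ⬝ᵥ v := dot_self_nonneg' v
    -- AM-GM: -2 a⬝b ≥ -t a⬝a - (1/t) b⬝b with t = (1-γ)/γ
    have hAMGM : 2 * (a ⬝ᵥ b) ≤ ((1 - γ)/γ) * (a ⬝ᵥ a) + (γ/(1 - γ)) * (b ⬝ᵥ b) := by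
      set s : ℝ := Real.sqrt ((1 - γ)/γ) with hs
      have hspos : 0 < s := Real.sqrt_pos.mpr (by positivity)
      have hs2 : s * s = (1 - γ)/γ := Real.mul_self_sqrt (by positivity)
      have h0 : 0 ≤ (s • a - s⁻¹ • b) ⬝ᵥ (s • a - s⁻¹ • b) := dot_self_nonneg' _
      have hexp : (s • a - s⁻¹ • b) ⬝ᵥ (s • a - s⁻¹ • b)
          = (s*s) * (a ⬝ᵥ a) - 2 * (a ⬝ᵥ b) + (s⁻¹ * s⁻¹) * (b ⬝ᵥ b) := by
        simp only [dotProduct_sub, sub_dotProduct,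
          smul_dotProduct, dotProduct_smul, smul_eq_mul]
        rw [dotProduct_comm b a]
        field_simp
        ring
      have hinv : s⁻¹ * s⁻¹ = γ/(1 - γ) := by
        rw [← mul_inv, hs2]
        field_simp
      rw [hexp, hs2, hinv] at h0
      linarith
    -- case split
    rcases eq_or_ne v 0 with hv0 | hv0
    · have hu0 : u ≠ 0 := by
        intro h; apply hx; rw [hxe, h, hv0]; ext i; cases i <;> rfl
      have hb0 : b = 0 := by rw [hb, hv0, Matrix.mulVec_zero]
      have hU : 0 < u ⬝ᵥ u := by
        rcases Function.ne_iff.mp hu0 with ⟨i, hi⟩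
        have : 0 < u i * u i := mul_self_pos.mpr hi
        calc (0:ℝ) < u i * u i := this
          _ ≤ u ⬝ᵥ u := Finset.single_le_sum (f := fun j => u j * u j)
              (fun j _ => mul_self_nonneg _) (Finset.mem_univ i)
      rw [hb0]
      simp only [dotProduct_zero, zero_dotProduct, hv0]
      have h1 : α < α / γ := by
        rw [lt_div_iff₀ hγ0]; nlinarith
      have h2 : α * (a ⬝ᵥ a) ≤ α * (u ⬝ᵥ u) := mul_le_mul_of_nonneg_left hA hα.le
      have h3 : α * (u ⬝ᵥ u) < α / γ * (u ⬝ᵥ u) := (mul_lt_mul_of_pos_right h1 hU)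
      linarith
    · have hV : 0 < v ⬝ᵥ v := by
        rcases Function.ne_iff.mp hv0 with ⟨i, hi⟩
        have : 0 < v i * v i := mul_self_pos.mpr hi
        calc (0:ℝ) < v i * v i := this
          _ ≤ v ⬝ᵥ v := Finset.single_le_sum (f := fun j => v j * v j)
              (fun j _ => mul_self_nonneg _) (Finset.mem_univ i)
      have hαγ : 0 < α / γ := by positivity
      have h1 : 2 * α * (a ⬝ᵥ b)
          ≤ α / γ * (a ⬝ᵥ a) - α * (a ⬝ᵥ a) + α * γ / (1 - γ) * (b ⬝ᵥ b) := by
        have h := mul_le_mul_of_nonneg_left hAMGM hα.le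
        have e1 : α * ((1 - γ)/γ * (a ⬝ᵥ a) + γ/(1 - γ) * (b ⬝ᵥ b))
            = α / γ * (a ⬝ᵥ a) - α * (a ⬝ᵥ a) + α * γ / (1 - γ) * (b ⬝ᵥ b) := by
          field_simp
        calc 2 * α * (a ⬝ᵥ b) = α * (2 * (a ⬝ᵥ b)) := by ring
          _ ≤ _ := h
          _ = _ := e1
      have h2 : α / γ * (a ⬝ᵥ a) ≤ α / γ * (u ⬝ᵥ u) :=
        mul_le_mul_of_nonneg_left hA hαγ.le
      have h3 : 0 < α / γ * (v ⬝ᵥ v) := mul_pos hαγ hV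
      linarith
end

section
/- Let Φ be convex, X* a minimizer of Φ subject to DX = d, and Λ* an associated dual optimal multiplier, so that Φ(X) - Φ(X*) + ⟨Λ*, DX - d⟩ ≥ 0 for all X. Suppose a point X̄ and constants ρ > ‖Λ*‖ and ω ≥ 0 satisfy Φ(X̄) - Φ(X*) + ρ‖D X̄ - d‖ ≤ ω. Then ‖D X̄ - d‖ ≤ ω/(ρ - ‖Λ*‖) and -ω‖Λ*‖/(ρ - ‖Λ*‖) ≤ Φ(X̄) - Φ(X*) ≤ ω. -/
open scoped RealInnerProductSpace

theorem stmt_13 {n p : ℕ} (Φ : EuclideanSpace ℝ (Fin n) → ℝ)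
    (hΦ : ConvexOn ℝ Set.univ Φ)
    (D : EuclideanSpace ℝ (Fin n) →ₗ[ℝ] EuclideanSpace ℝ (Fin p))
    (d : EuclideanSpace ℝ (Fin p))
    (Xstar : EuclideanSpace ℝ (Fin n)) (Λstar : EuclideanSpace ℝ (Fin p))
    (hsaddle : ∀ X, 0 ≤ Φ X - Φ Xstar + ⟪Λstar, D X - d⟫)
    (Xbar : EuclideanSpace ℝ (Fin n)) (ρ ω : ℝ)
    (hρ : ‖Λstar‖ < ρ) (hω : 0 ≤ ω)
    (hgap : Φ Xbar - Φ Xstar + ρ * ‖D Xbar - d‖ ≤ ω) :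
    ‖D Xbar - d‖ ≤ ω / (ρ - ‖Λstar‖) ∧
      -(ω * ‖Λstar‖) / (ρ - ‖Λstar‖) ≤ Φ Xbar - Φ Xstar ∧
      Φ Xbar - Φ Xstar ≤ ω := by
  set r := D Xbar - d with hr
  have hpos : 0 < ρ - ‖Λstar‖ := by linarith
  have hcs : ⟪Λstar, r⟫ ≤ ‖Λstar‖ * ‖r‖ := real_inner_le_norm _ _
  have hs := hsaddle Xbar
  have hlow : -(‖Λstar‖ * ‖r‖) ≤ Φ Xbar - Φ Xstar := by linarith
  have hrbound : ‖r‖ ≤ ω / (ρ - ‖Λstar‖) := by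
    rw [le_div_iff₀ hpos]; nlinarith
  refine ⟨hrbound, ?_, ?_⟩
  · have : ‖Λstar‖ * ‖r‖ ≤ ‖Λstar‖ * (ω / (ρ - ‖Λstar‖)) :=
      mul_le_mul_of_nonneg_left hrbound (norm_nonneg _)
    have h2 : ‖Λstar‖ * (ω / (ρ - ‖Λstar‖)) = ω * ‖Λstar‖ / (ρ - ‖Λstar‖) := by ring
    rw [neg_div]; linarith [h2 ▸ this]
  · nlinarith [norm_nonneg r, mul_nonneg (le_of_lt (lt_of_le_of_lt (norm_nonneg Λstar) hρ)) (norm_nonneg r)]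
end
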